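/- For every pair of adjacent vertices u, v of G and every i ∈ {1,…,k}: Pr[u ∈ C and r_u ∈ I_i and v ∈ C_i] = (1 − b_i)^{Δ−1} · Pr[r_u ∈ I_i and v ∈ C_i], and consequently Pr[u ∈ C and r_u ∈ I_i and v ∈ C_i] ≤ e^{−a_i + 1/2} · Pr[r_u ∈ I_i and v ∈ C_i]. -/

import Mathlib

open MeasureTheory Real
open scoped ENNReal

/-- `log* x`: the least `n` such that the `n`-fold iterated natural logarithm of `x` is `≤ 1`. -/
noncomputable def logStar (x : ℝ) : ℕ := sInf {n : ℕ | Real.log^[n] x ≤ 1}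

/-- Auxiliary sequence: `aRec 0 = 5`, `aRec (n+1) = exp (aRec n - 3)`. -/
noncomputable def aRec : ℕ → ℝ
  | 0 => 5
  | n + 1 => Real.exp (aRec n - 3)

/-- Paper-indexed sequence `a_i`: `aP 1 = 5` and `aP (i+1) = exp (aP i - 3)` for `i ≥ 1`. -/
noncomputable def aP (i : ℕ) : ℝ := aRec (i - 1)

/-- `b_i = a_i / Δ`. -/
noncomputable def bP (Δ i : ℕ) : ℝ := aP i / Δ

/-- `k = ⌊(log* Δ) / 10⌋`. -/
noncomputable def kP (Δ : ℕ) : ℕ := logStar Δ / 10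

/-- `v ∈ C`: `r v ∈ I_i = (b_i, b_{i+1}]` for some `i ∈ {1,…,k}` and
`r u ∈ J_i = (b_i, 1]` for every neighbor `u` of `v`. -/
def isCand {V : Type*} (G : SimpleGraph V) (Δ : ℕ) (r : V → ℝ) (v : V) : Prop :=
  ∃ i ∈ Finset.Icc 1 (kP Δ), r v ∈ Set.Ioc (bP Δ i) (bP Δ (i + 1)) ∧
    ∀ u, G.Adj v u → r u ∈ Set.Ioc (bP Δ i) 1

/-- `v ∈ C_i`: `v` is a candidate with rank in `I_i`. -/
def isCandAt {V : Type*} (G : SimpleGraph V) (Δ : ℕ) (r : V → ℝ) (i : ℕ) (v : V) : Prop :=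
  isCand G Δ r v ∧ r v ∈ Set.Ioc (bP Δ i) (bP Δ (i + 1))

/-- `v ∈ 𝓘`: `v` is a candidate and no neighbor of `v` is a candidate. -/
def inIS {V : Type*} (G : SimpleGraph V) (Δ : ℕ) (r : V → ℝ) (v : V) : Prop :=
  isCand G Δ r v ∧ ∀ u, G.Adj v u → ¬ isCand G Δ r u

/-- The ranks are independent and uniform on `[0,1]`: product Lebesgue measure on `[0,1]^V`. -/
noncomputable def rankMeasure (V : Type*) [Fintype V] : Measure (V → ℝ) :=
  Measure.pi fun _ => (volume : Measure ℝ).restrict (Set.Icc 0 1)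

lemma iterExp_mono (n : ℕ) : Monotone (Real.exp^[n]) := by
  induction n with
  | zero => exact monotone_id
  | succ n ih => rw [Function.iterate_succ'] ; exact Real.exp_monotone.comp ih

lemma aRec_ge_five (n : ℕ) : 5 ≤ aRec n := by
  induction n with
  | zero => simp [aRec]
  | succ n ih =>
    have h2 : Real.exp 2 ≤ Real.exp (aRec n - 3) := Real.exp_le_exp.mpr (by linarith)
    have h3 : Real.exp 2 = Real.exp 1 * Real.exp 1 := by rw [← Real.exp_add]; norm_num
    have := Real.exp_one_gt_d9
    simp only [aRec]
    nlinarith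

lemma aRec_mono : Monotone aRec := by
  apply monotone_nat_of_le_succ
  intro n
  have ha := aRec_ge_five n
  have h1 : Real.exp (aRec n - 3) = Real.exp (aRec n - 5) * Real.exp 2 := by
    rw [← Real.exp_add]; ring_nf
  have h2 : aRec n - 5 + 1 ≤ Real.exp (aRec n - 5) := Real.add_one_le_exp _
  have h3 : Real.exp 2 = Real.exp 1 * Real.exp 1 := by rw [← Real.exp_add]; norm_num
  have he := Real.exp_one_gt_d9
  have he2 : (7:ℝ) ≤ Real.exp 2 := by nlinarith
  have p1 : (aRec n - 4) * Real.exp 2 ≤ Real.exp (aRec n - 5) * Real.exp 2 :=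
    mul_le_mul_of_nonneg_right (by linarith) (Real.exp_pos 2).le
  have p2 : (aRec n - 4) * 7 ≤ (aRec n - 4) * Real.exp 2 :=
    mul_le_mul_of_nonneg_left he2 (by linarith)
  show aRec n ≤ Real.exp (aRec n - 3)
  linarith

lemma aRec_le_iterExp (n : ℕ) : aRec n ≤ Real.exp^[n] 5 := by
  induction n with
  | zero => exact le_rfl
  | succ n ih =>
    rw [Function.iterate_succ_apply']
    calc aRec (n+1) = Real.exp (aRec n - 3) := rfl
      _ ≤ Real.exp (Real.exp^[n] 5) := Real.exp_le_exp.mpr (by linarith)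

lemma exp_mul_iterExp (n : ℕ) (x : ℝ) (hx : 0 ≤ x) :
    Real.exp 1 * Real.exp^[n+1] x ≤ Real.exp^[n+1] (x+1) := by
  induction n generalizing x with
  | zero =>
    show Real.exp 1 * Real.exp x ≤ Real.exp (x + 1)
    rw [← Real.exp_add]
    exact le_of_eq (by ring_nf)
  | succ n ih =>
    rw [show n+1+1 = (n+1)+1 from rfl, Function.iterate_succ_apply,
      Function.iterate_succ_apply]
    have h1 : Real.exp x + 1 ≤ Real.exp (x+1) := by
      rw [Real.exp_add]
      have : (1:ℝ) ≤ Real.exp x := Real.one_le_exp hx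
      nlinarith [Real.exp_one_gt_d9]
    calc Real.exp 1 * Real.exp^[n+1] (Real.exp x)
        ≤ Real.exp^[n+1] (Real.exp x + 1) := ih _ (Real.exp_pos x).le
      _ ≤ Real.exp^[n+1] (Real.exp (x+1)) := iterExp_mono _ h1

lemma iter_log_gt (m : ℕ) (x : ℝ) (h : ∀ j ≤ m, 1 < Real.log^[j] x) :
    Real.exp^[m] 1 < x := by
  induction m generalizing x with
  | zero => simpa using h 0 le_rfl
  | succ m ih =>
    have hx1 : 1 < x := by simpa using h 0 (Nat.zero_le _)
    have hlog : Real.exp^[m] 1 < Real.log x := by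
      apply ih
      intro j hj
      have := h (j+1) (by omega)
      rwa [Function.iterate_succ_apply] at this
    rw [Function.iterate_succ_apply']
    calc Real.exp (Real.exp^[m] 1) < Real.exp (Real.log x) := Real.exp_lt_exp.mpr hlog
      _ = x := Real.exp_log (by linarith)

lemma one_le_iterExp (n : ℕ) : (1:ℝ) ≤ Real.exp^[n] 1 := by
  induction n with
  | zero => simp
  | succ n ih =>
    rw [Function.iterate_succ_apply']
    exact Real.one_le_exp (by linarith)

lemma key_lt (Δ i : ℕ) (hΔ : 1000 < Δ) (h1 : 1 ≤ i) (hk : i ≤ kP Δ) :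
    Real.exp^[i] 6 < (Δ:ℝ) := by
  have hk' : i ≤ logStar (Δ:ℝ) / 10 := hk
  have hd := Nat.div_mul_le_self (logStar (Δ:ℝ)) 10
  have h10 : i + 3 ≤ logStar (Δ:ℝ) := by omega
  have hgt : ∀ j ≤ i + 2, 1 < Real.log^[j] (Δ:ℝ) := by
    intro j hj
    by_contra hcon
    have hmem : j ∈ {n : ℕ | Real.log^[n] (Δ:ℝ) ≤ 1} := not_lt.mp hcon
    have := Nat.sInf_le hmem
    have : logStar (Δ:ℝ) ≤ j := this
    omega
  have hiter := iter_log_gt (i+2) (Δ:ℝ) hgt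
  have h6 : (6:ℝ) ≤ Real.exp (Real.exp 1) := by
    have h2e : (2:ℝ) ≤ Real.exp 1 := by nlinarith [Real.exp_one_gt_d9]
    have : Real.exp 2 ≤ Real.exp (Real.exp 1) := Real.exp_le_exp.mpr h2e
    have h3 : Real.exp 2 = Real.exp 1 * Real.exp 1 := by rw [← Real.exp_add]; norm_num
    nlinarith [Real.exp_one_gt_d9]
  have heq : Real.exp^[i+2] (1:ℝ) = Real.exp^[i] (Real.exp (Real.exp 1)) := by
    rw [show i+2 = i+1+1 from rfl, Function.iterate_succ_apply, Function.iterate_succ_apply]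
  calc Real.exp^[i] 6 ≤ Real.exp^[i] (Real.exp (Real.exp 1)) := iterExp_mono i h6
    _ = Real.exp^[i+2] 1 := heq.symm
    _ < (Δ:ℝ) := hiter

theorem stmt4 {V : Type*} [Fintype V] [DecidableEq V]
    (G : SimpleGraph V) [DecidableRel G.Adj] (Δ : ℕ) (hΔ : 1000 < Δ)
    (hreg : G.IsRegularOfDegree Δ) (htri : G.CliqueFree 3)
    (u v : V) (huv : G.Adj u v) (i : ℕ) (hi : i ∈ Finset.Icc 1 (kP Δ)) :
    rankMeasure V {r | isCand G Δ r u ∧ r u ∈ Set.Ioc (bP Δ i) (bP Δ (i + 1)) ∧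
          isCandAt G Δ r i v} =
        ENNReal.ofReal ((1 - bP Δ i) ^ (Δ - 1)) *
          rankMeasure V {r | r u ∈ Set.Ioc (bP Δ i) (bP Δ (i + 1)) ∧ isCandAt G Δ r i v} ∧
      rankMeasure V {r | isCand G Δ r u ∧ r u ∈ Set.Ioc (bP Δ i) (bP Δ (i + 1)) ∧
          isCandAt G Δ r i v} ≤
        ENNReal.ofReal (Real.exp (-aP i + 1 / 2)) *
          rankMeasure V {r | r u ∈ Set.Ioc (bP Δ i) (bP Δ (i + 1)) ∧ isCandAt G Δ r i v} := by
  classical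
  obtain ⟨hi1, hik⟩ := Finset.mem_Icc.mp hi
  -- quantitative facts
  have hΔ0 : (0:ℝ) < Δ := by exact_mod_cast (by omega : 0 < Δ)
  have hkey : Real.exp^[i] 6 < (Δ:ℝ) := key_lt Δ i hΔ hi1 hik
  have ha5 : 5 ≤ aP i := aRec_ge_five _
  have ha'Δ : aP (i+1) ≤ (Δ:ℝ) := by
    have h1 : aP (i+1) = aRec i := by simp [aP]
    have h2 : Real.exp^[i] 5 ≤ Real.exp^[i] 6 := iterExp_mono i (by norm_num)
    have := aRec_le_iterExp i
    linarith
  have haΔ : 2 * aP i ≤ (Δ:ℝ) := by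
    obtain ⟨m, rfl⟩ : ∃ m, i = m + 1 := ⟨i - 1, by omega⟩
    have h1 : aP (m+1) = aRec m := by simp [aP]
    have h2 : aRec m ≤ Real.exp^[m] 5 := aRec_le_iterExp m
    have h3 : Real.exp 1 * Real.exp^[m+1] 5 ≤ Real.exp^[m+1] 6 := by
      have := exp_mul_iterExp m 5 (by norm_num)
      norm_num at this
      exact this
    have h4 : Real.exp^[m] 5 ≤ Real.exp^[m+1] 5 := by
      rw [Function.iterate_succ_apply]
      exact iterExp_mono m (by nlinarith [Real.add_one_le_exp (5:ℝ)])
    have h5 : (2:ℝ) ≤ Real.exp 1 := by nlinarith [Real.exp_one_gt_d9]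
    have h6 : 2 * Real.exp^[m+1] 5 ≤ Real.exp 1 * Real.exp^[m+1] 5 := by
      have : (0:ℝ) ≤ Real.exp^[m+1] 5 := by
        rw [Function.iterate_succ_apply']; exact (Real.exp_pos _).le
      nlinarith
    linarith
  have hb0 : 0 ≤ bP Δ i := div_nonneg (by linarith) hΔ0.le
  have hb1 : bP Δ i ≤ 1 := (div_le_one hΔ0).mpr (by linarith)
  have hb'1 : bP Δ (i+1) ≤ 1 := (div_le_one hΔ0).mpr ha'Δ
  have hbmono : ∀ j₁ j₂ : ℕ, j₁ ≤ j₂ → bP Δ j₁ ≤ bP Δ j₂ := by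
    intro j₁ j₂ h
    rw [bP, bP]
    gcongr
    exact aRec_mono (by omega)
  -- candidate characterization
  have hcand : ∀ (r : V → ℝ) (w : V), isCandAt G Δ r i w ↔
      (r w ∈ Set.Ioc (bP Δ i) (bP Δ (i+1)) ∧ ∀ x, G.Adj w x → r x ∈ Set.Ioc (bP Δ i) 1) := by
    intro r w
    constructor
    · rintro ⟨⟨j, hj, hrj, hnb⟩, hri⟩
      have hji : j = i := by
        by_contra hne
        rcases lt_or_gt_of_ne hne with h | h
        · have hle : bP Δ (j+1) ≤ bP Δ i := hbmono _ _ (by omega)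
          exact absurd hri.1 (not_lt.mpr (hrj.2.trans hle))
        · have hle : bP Δ (i+1) ≤ bP Δ j := hbmono _ _ (by omega)
          exact absurd hrj.1 (not_lt.mpr (hri.2.trans hle))
      subst hji
      exact ⟨hri, hnb⟩
    · rintro ⟨hri, hnb⟩
      exact ⟨⟨i, hi, hri, hnb⟩, hri⟩
  set Ii : Set ℝ := Set.Ioc (bP Δ i) (bP Δ (i+1)) with hIi
  set Ji : Set ℝ := Set.Ioc (bP Δ i) 1 with hJi
  have hIJ : Ii ⊆ Ji := Set.Ioc_subset_Ioc le_rfl hb'1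
  set t : V → Set ℝ := fun w =>
    if w = u ∨ w = v then Ii else if G.Adj v w then Ji else Set.univ with ht
  set t' : V → Set ℝ := fun w =>
    if w = u ∨ w = v then Ii else if G.Adj v w then Ji
    else if G.Adj u w then Ji else Set.univ with ht'
  have hBset : {r : V → ℝ | r u ∈ Ii ∧ isCandAt G Δ r i v} = Set.pi Set.univ t := by
    ext r
    simp only [Set.mem_setOf_eq, Set.mem_pi, Set.mem_univ, forall_const, ht]
    constructor
    · rintro ⟨hu, hv⟩
      obtain ⟨hv1, hv2⟩ := (hcand r v).mp hv
      intro w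
      by_cases h1 : w = u ∨ w = v
      · rw [if_pos h1]; rcases h1 with rfl | rfl
        · exact hu
        · exact hv1
      · rw [if_neg h1]
        by_cases h2 : G.Adj v w
        · rw [if_pos h2]; exact hv2 w h2
        · rw [if_neg h2]; trivial
    · intro h
      have hu1 : r u ∈ Ii := by have := h u; rwa [if_pos (Or.inl rfl)] at this
      have hv1 : r v ∈ Ii := by have := h v; rwa [if_pos (Or.inr rfl)] at this
      refine ⟨hu1, (hcand r v).mpr ⟨hv1, ?_⟩⟩
      intro x hx
      have hxx := h x
      by_cases h1 : x = u ∨ x = v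
      · rw [if_pos h1] at hxx; exact hIJ hxx
      · rw [if_neg h1, if_pos hx] at hxx; exact hxx
  have hAset : {r : V → ℝ | isCand G Δ r u ∧ r u ∈ Ii ∧ isCandAt G Δ r i v} =
      Set.pi Set.univ t' := by
    ext r
    simp only [Set.mem_setOf_eq, Set.mem_pi, Set.mem_univ, forall_const, ht']
    constructor
    · rintro ⟨hcu, hu, hv⟩
      obtain ⟨hu1, hu2⟩ := (hcand r u).mp ⟨hcu, hu⟩
      obtain ⟨hv1, hv2⟩ := (hcand r v).mp hv
      intro w
      by_cases h1 : w = u ∨ w = v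
      · rw [if_pos h1]; rcases h1 with rfl | rfl
        · exact hu1
        · exact hv1
      · rw [if_neg h1]
        by_cases h2 : G.Adj v w
        · rw [if_pos h2]; exact hv2 w h2
        · rw [if_neg h2]
          by_cases h3 : G.Adj u w
          · rw [if_pos h3]; exact hu2 w h3
          · rw [if_neg h3]; trivial
    · intro h
      have hu1 : r u ∈ Ii := by have := h u; rwa [if_pos (Or.inl rfl)] at this
      have hv1 : r v ∈ Ii := by have := h v; rwa [if_pos (Or.inr rfl)] at this
      have hnbv : ∀ x, G.Adj v x → r x ∈ Ji := by
        intro x hx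
        have hxx := h x
        by_cases h1 : x = u ∨ x = v
        · rw [if_pos h1] at hxx; exact hIJ hxx
        · rw [if_neg h1, if_pos hx] at hxx; exact hxx
      have hnbu : ∀ x, G.Adj u x → r x ∈ Ji := by
        intro x hx
        have hxx := h x
        by_cases h1 : x = u ∨ x = v
        · rw [if_pos h1] at hxx; exact hIJ hxx
        · rw [if_neg h1] at hxx
          by_cases h2 : G.Adj v x
          · rw [if_pos h2] at hxx; exact hxx
          · rw [if_neg h2, if_pos hx] at hxx; exact hxx
      exact ⟨((hcand r u).mpr ⟨hu1, hnbu⟩).1, hu1, (hcand r v).mpr ⟨hv1, hnbv⟩⟩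
  -- measure computation
  set μ0 : Measure ℝ := (volume : Measure ℝ).restrict (Set.Icc 0 1) with hμ0
  have hμ0univ : μ0 Set.univ = 1 := by
    rw [hμ0, Measure.restrict_apply_univ, Real.volume_Icc]; norm_num
  have hμ0J : μ0 Ji = ENNReal.ofReal (1 - bP Δ i) := by
    rw [hμ0, hJi, Measure.restrict_apply measurableSet_Ioc]
    have hsub : Set.Ioc (bP Δ i) 1 ∩ Set.Icc 0 1 = Set.Ioc (bP Δ i) 1 :=
      Set.inter_eq_left.mpr (fun x hx => ⟨hb0.trans hx.1.le, hx.2⟩)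
    rw [hsub, Real.volume_Ioc]
  set W : Finset V := (G.neighborFinset u).erase v with hW
  have hWcard : W.card = Δ - 1 := by
    rw [hW, Finset.card_erase_of_mem (by rwa [SimpleGraph.mem_neighborFinset])]
    have : (G.neighborFinset u).card = Δ := hreg u
    omega
  have hnadj : ∀ w, G.Adj u w → G.Adj v w → False := by
    intro w h1 h2
    exact htri {u, v, w} (SimpleGraph.is3Clique_triple_iff.mpr ⟨huv, h1, h2⟩)
  have hWmem : ∀ w ∈ W, ¬(w = u ∨ w = v) ∧ ¬ G.Adj v w ∧ G.Adj u w := by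
    intro w hw
    rw [hW, Finset.mem_erase, SimpleGraph.mem_neighborFinset] at hw
    obtain ⟨hwv, hwu⟩ := hw
    refine ⟨?_, fun h => hnadj w hwu h, hwu⟩
    rintro (rfl | rfl)
    · exact G.irrefl hwu
    · exact hwv rfl
  have hpiA : rankMeasure V (Set.pi Set.univ t') = ∏ w, μ0 (t' w) := by
    rw [rankMeasure, ← hμ0, Measure.pi_pi]
  have hpiB : rankMeasure V (Set.pi Set.univ t) = ∏ w, μ0 (t w) := by
    rw [rankMeasure, ← hμ0, Measure.pi_pi]
  have hprodA : ∏ w, μ0 (t' w) = ENNReal.ofReal (1 - bP Δ i) ^ (Δ - 1) * ∏ w, μ0 (t w) := by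
    rw [← Finset.prod_mul_prod_compl W (fun w => μ0 (t' w)),
      ← Finset.prod_mul_prod_compl W (fun w => μ0 (t w))]
    have h1 : ∏ w ∈ W, μ0 (t' w) = ENNReal.ofReal (1 - bP Δ i) ^ (Δ - 1) := by
      rw [Finset.prod_congr rfl (fun w hw => ?_), Finset.prod_const, hWcard]
      obtain ⟨h2, h3, h4⟩ := hWmem w hw
      show μ0 (t' w) = _
      rw [ht']
      simp only
      rw [if_neg h2, if_neg h3, if_pos h4, hμ0J]
    have h2 : ∏ w ∈ W, μ0 (t w) = 1 := by
      apply Finset.prod_eq_one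
      intro w hw
      obtain ⟨h2, h3, _⟩ := hWmem w hw
      show μ0 (t w) = 1
      rw [ht]
      simp only
      rw [if_neg h2, if_neg h3, hμ0univ]
    have h3 : ∏ w ∈ Wᶜ, μ0 (t' w) = ∏ w ∈ Wᶜ, μ0 (t w) := by
      apply Finset.prod_congr rfl
      intro w hw
      rw [Finset.mem_compl, hW, Finset.mem_erase] at hw
      push_neg at hw
      congr 1
      rw [ht, ht']
      simp only
      by_cases hc1 : w = u ∨ w = v
      · rw [if_pos hc1, if_pos hc1]
      · rw [if_neg hc1, if_neg hc1]
        by_cases hc2 : G.Adj v w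
        · rw [if_pos hc2, if_pos hc2]
        · rw [if_neg hc2, if_neg hc2]
          have hwv : w ≠ v := fun h => hc1 (Or.inr h)
          have : ¬ G.Adj u w := by
            intro hadj
            exact (hw hwv).elim ((SimpleGraph.mem_neighborFinset G u w).mpr hadj)
          rw [if_neg this]
    rw [h1, h2, one_mul, h3]
  have heq : rankMeasure V {r : V → ℝ | isCand G Δ r u ∧ r u ∈ Ii ∧ isCandAt G Δ r i v} =
      ENNReal.ofReal ((1 - bP Δ i) ^ (Δ - 1)) *
        rankMeasure V {r : V → ℝ | r u ∈ Ii ∧ isCandAt G Δ r i v} := by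
    rw [hAset, hBset, hpiA, hpiB, hprodA, ENNReal.ofReal_pow (by linarith)]
  refine ⟨heq, ?_⟩
  rw [heq]
  refine mul_le_mul_left (ENNReal.ofReal_le_ofReal ?_) _
  -- real inequality
  have hbb : 0 ≤ 1 - bP Δ i := by linarith
  have hstep1 : 1 - bP Δ i ≤ Real.exp (-(bP Δ i)) := by
    have := Real.add_one_le_exp (-(bP Δ i)); linarith
  have hcast : ((Δ - 1 : ℕ) : ℝ) = (Δ:ℝ) - 1 := by
    rw [Nat.cast_sub (by omega)]; norm_num
  have hdiv : aP i / Δ ≤ 1/2 := by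
    rw [div_le_iff₀ hΔ0]; linarith
  have hexp : ((Δ - 1 : ℕ) : ℝ) * (-(bP Δ i)) ≤ -aP i + 1/2 := by
    rw [hcast, bP]
    have hΔne : (Δ:ℝ) ≠ 0 := ne_of_gt hΔ0
    have hid : ((Δ:ℝ) - 1) * (aP i / Δ) = aP i - aP i / Δ := by
      field_simp
    nlinarith [hid, hdiv]
  calc (1 - bP Δ i) ^ (Δ - 1) ≤ Real.exp (-(bP Δ i)) ^ (Δ - 1) :=
        pow_le_pow_left₀ hbb hstep1 _
    _ = Real.exp (((Δ - 1 : ℕ) : ℝ) * (-(bP Δ i))) := (Real.exp_nat_mul _ _).symm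
    _ ≤ Real.exp (-aP i + 1/2) := Real.exp_le_exp.mpr hexp
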